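/- arXiv:1906.02228 — 2 statements merged into one kernel-verified Lean document; each statement's English description precedes it below -/
import Mathlib

section
/- For a k-permutation σ of degree n, the following are equivalent: (i) for every interval {a,a+1,…,b} ⊆ {1,…,n} with a < b, the restriction σ^{|{a,…,b}} is k-rooted cuttable; (ii) for every subset L ⊆ {1,…,n} with |L| ≥ 2, the restriction σ^{|L} is k-rooted cuttable. -/
/-- `σ` is a `k`-permutation of degree `n`: a word over the alphabet `{1, …, n}`
in which every value `i ∈ {1, …, n}` occurs exactly `k` times (and no other
letter occurs). -/
def IsMultiPerm (k n : ℕ) (σ : List ℕ) : Prop :=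
  ∀ i : ℕ, σ.count i = if 1 ≤ i ∧ i ≤ n then k else 0

/-- The restriction `σ^{|L}` of a multipermutation `σ` to a set `L` of values:
delete all letters whose value is not in `L`, and replace, for each `x`, the
`x`-th smallest element of `L` by `x`. -/
def restrict (σ : List ℕ) (L : Finset ℕ) : List ℕ :=
  (σ.filter fun x => decide (x ∈ L)).map fun x => (L.filter fun y => y ≤ x).card

/-- `γ` is a `k`-rooted cut of the `k`-permutation `σ` of degree `n`:
`1 ≤ γ ≤ n - 1` and `σ = μ·ν·ω` where `μ` consists of the first `k` letters of
`σ` and `ν`, `ω` are words such that every letter of `ν` is at most `γ` and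
every letter of `ω` is greater than `γ`. -/
def IsKRootedCut (k n : ℕ) (σ : List ℕ) (γ : ℕ) : Prop :=
  1 ≤ γ ∧ γ ≤ n - 1 ∧
    ∃ μ ν ω : List ℕ,
      σ = μ ++ ν ++ ω ∧ μ.length = k ∧ (∀ x ∈ ν, x ≤ γ) ∧ (∀ x ∈ ω, γ < x)

/-- A `k`-permutation of degree `n` is `k`-rooted cuttable if it has a
`k`-rooted cut. -/
def KRootedCuttable (k n : ℕ) (σ : List ℕ) : Prop :=
  ∃ γ, IsKRootedCut k n σ γ

/-- A `k`-permutation of degree `n` is fully `k`-rooted cuttable if its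
restriction to every interval `{a, …, b} ⊆ {1, …, n}` with `a < b` is
`k`-rooted cuttable. -/
def FullyKRootedCuttable (k n : ℕ) (σ : List ℕ) : Prop :=
  ∀ a b : ℕ, 1 ≤ a → a < b → b ≤ n →
    KRootedCuttable k (Finset.Icc a b).card (restrict σ (Finset.Icc a b))

/-!
Only (i) ⇒ (ii) needs an argument, by downward induction on `|L|`. If `L` is not an
interval, pick a missing value `c` with `min L < c < max L`; the restriction to `L ∪ {c}` has a
`k`-rooted cut `γ`. Deleting the letters `c` from it leaves the relative order of the other
letters unchanged and can only move letters into the root, so after relabelling it is a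
`k`-rooted cut of `σ^{|L}` at `γ - 1` or `γ`, according as the rank `p` of `c` is at most `γ` or
not. Because `c` is neither the least nor the greatest value, `2 ≤ p ≤ |L|`, which keeps the new
cut within `1, …, |L| - 1`.
-/

open Finset

section RootedSplit

variable {α β : Type*} {k : ℕ} {p q p' q' : α → Prop} {w : List α}

def IsRootedSplit (k : ℕ) (p q : α → Prop) (w : List α) : Prop :=
  ∃ μ ν ω : List α, w = μ ++ ν ++ ω ∧ μ.length = k ∧ (∀ x ∈ ν, p x) ∧ ∀ x ∈ ω, q x

theorem isRootedSplit_of_length_le {μ ν ω : List α} (hw : w = μ ++ ν ++ ω)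
    (hμ : μ.length ≤ k) (hk : k ≤ w.length) (hν : ∀ x ∈ ν, p x) (hω : ∀ x ∈ ω, q x) :
    IsRootedSplit k p q w := by
  have hdrop : w.drop k = ν.drop (k - μ.length) ++ ω.drop (k - μ.length - ν.length) := by
    rw [hw, List.append_assoc, List.drop_append, List.drop_eq_nil_of_le hμ, List.nil_append,
      List.drop_append]
  refine ⟨w.take k, ν.drop (k - μ.length), ω.drop (k - μ.length - ν.length), ?_,
    by rw [List.length_take]; omega,
    fun x hx => hν x (List.mem_of_mem_drop hx), fun x hx => hω x (List.mem_of_mem_drop hx)⟩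
  rw [List.append_assoc, ← hdrop, List.take_append_drop]

theorem IsRootedSplit.filter (h : IsRootedSplit k p q w) {r : α → Bool}
    (hk : k ≤ (w.filter r).length) : IsRootedSplit k p q (w.filter r) := by
  obtain ⟨μ, ν, ω, rfl, hμ, hν, hω⟩ := h
  refine isRootedSplit_of_length_le (μ := μ.filter r) (ν := ν.filter r) (ω := ω.filter r)
    (by simp only [List.filter_append]) ?_ hk
    (fun x hx => hν x (List.mem_filter.mp hx).1) (fun x hx => hω x (List.mem_filter.mp hx).1)
  exact hμ ▸ List.length_filter_le r μ

theorem IsRootedSplit.mono (h : IsRootedSplit k p q w) (hp : ∀ x ∈ w, p x → p' x)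
    (hq : ∀ x ∈ w, q x → q' x) : IsRootedSplit k p' q' w := by
  obtain ⟨μ, ν, ω, rfl, hμ, hν, hω⟩ := h
  exact ⟨μ, ν, ω, rfl, hμ, fun x hx => hp x (by simp [hx]) (hν x hx),
    fun x hx => hq x (by simp [hx]) (hω x hx)⟩

theorem isRootedSplit_map_iff {p q : β → Prop} {f : α → β} :
    IsRootedSplit k p q (w.map f) ↔ IsRootedSplit k (p ∘ f) (q ∘ f) w := by
  constructor
  · rintro ⟨μ, ν, ω, hw, hμ, hν, hω⟩
    obtain ⟨μν', ω', rfl, hμν, rfl⟩ := List.map_eq_append_iff.mp hw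
    obtain ⟨μ', ν', rfl, rfl, rfl⟩ := List.map_eq_append_iff.mp hμν
    exact ⟨μ', ν', ω', rfl, by simpa using hμ, fun x hx => hν _ (List.mem_map_of_mem hx),
      fun x hx => hω _ (List.mem_map_of_mem hx)⟩
  · rintro ⟨μ, ν, ω, rfl, hμ, hν, hω⟩
    exact ⟨μ.map f, ν.map f, ω.map f, by simp only [List.map_append], by simpa using hμ,
      by simpa using hν, by simpa using hω⟩

end RootedSplit

section Rank

def rankIn (L : Finset ℕ) (x : ℕ) : ℕ := #{y ∈ L | y ≤ x}

variable {L : Finset ℕ} {c x : ℕ}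

theorem restrict_eq_map_rankIn (σ : List ℕ) (L : Finset ℕ) :
    restrict σ L = (σ.filter fun x => decide (x ∈ L)).map (rankIn L) :=
  rfl

theorem one_le_rankIn (hx : x ∈ L) : 1 ≤ rankIn L x :=
  card_pos.mpr ⟨x, mem_filter.mpr ⟨hx, le_rfl⟩⟩

theorem rankIn_le_card (L : Finset ℕ) (x : ℕ) : rankIn L x ≤ #L :=
  card_filter_le _ _

theorem rankIn_lt_rankIn (hc : c ∈ L) (h : x < c) : rankIn L x < rankIn L c :=
  card_lt_card <| (ssubset_iff_of_subset fun y hy => by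
      simp only [mem_filter] at hy ⊢; exact ⟨hy.1, by omega⟩).mpr
    ⟨c, mem_filter.mpr ⟨hc, le_rfl⟩, by simp only [mem_filter, not_and]; omega⟩

theorem rankIn_insert_of_lt (h : x < c) : rankIn (insert c L) x = rankIn L x := by
  simp only [rankIn, filter_insert, if_neg (show ¬c ≤ x by omega)]

theorem rankIn_insert_of_le (hc : c ∉ L) (h : c ≤ x) :
    rankIn (insert c L) x = rankIn L x + 1 := by
  simp only [rankIn, filter_insert, if_pos h]
  exact card_insert_of_notMem (by simp [hc])

theorem rankIn_insert_cases (hc : c ∉ L) (hx : x ∈ L) :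
    rankIn (insert c L) x = rankIn L x ∧ rankIn (insert c L) x < rankIn (insert c L) c ∨
      rankIn (insert c L) x = rankIn L x + 1 ∧
        rankIn (insert c L) c < rankIn (insert c L) x := by
  rcases lt_or_gt_of_ne (show x ≠ c by rintro rfl; exact hc hx) with hxc | hcx
  · exact .inl ⟨rankIn_insert_of_lt hxc, rankIn_lt_rankIn (mem_insert_self c L) hxc⟩
  · exact .inr ⟨rankIn_insert_of_le hc hcx.le,
      rankIn_lt_rankIn (mem_insert_of_mem hx) hcx⟩

end Rank

section Restrict

variable {k n : ℕ} {σ : List ℕ}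

theorem filter_mem_filter_mem_of_subset {L L' : Finset ℕ} (h : L ⊆ L') :
    (σ.filter fun x => decide (x ∈ L')).filter (fun x => decide (x ∈ L)) =
      σ.filter fun x => decide (x ∈ L) := by
  rw [List.filter_filter]
  refine List.filter_congr fun x _ => ?_
  by_cases hx : x ∈ L
  · simp [hx, h hx]
  · simp [hx]

theorem le_length_restrict (hσ : IsMultiPerm k n σ) {L : Finset ℕ} (hL : L ⊆ Icc 1 n)
    (hne : L.Nonempty) : k ≤ (restrict σ L).length := by
  obtain ⟨i, hi⟩ := hne
  calc k = (σ.filter fun x => decide (x ∈ L)).count i := by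
        rw [List.count_filter (by simp [hi]), hσ i, if_pos (mem_Icc.mp (hL hi))]
    _ ≤ (σ.filter fun x => decide (x ∈ L)).length := List.count_le_length
    _ = (restrict σ L).length := by rw [restrict_eq_map_rankIn, List.length_map]

theorem KRootedCuttable.restrict_of_insert {L : Finset ℕ} {a b c : ℕ} (hc : c ∉ L)
    (ha : a ∈ L) (hac : a < c) (hb : b ∈ L) (hcb : c < b)
    (hlen : k ≤ (restrict σ L).length)
    (h : KRootedCuttable k #(insert c L) (restrict σ (insert c L))) :
    KRootedCuttable k #L (restrict σ L) := by
  obtain ⟨γ, hγ₁, hγ₂, hsplit⟩ := h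
  have hcard : #(insert c L) = #L + 1 := card_insert_of_notMem hc
  have hp₁ : 2 ≤ rankIn (insert c L) c := by
    have := one_le_rankIn (mem_insert_of_mem ha : a ∈ insert c L)
    have := rankIn_lt_rankIn (mem_insert_self c L) hac
    omega
  have hp₂ : rankIn (insert c L) c ≤ #L := by
    have := rankIn_lt_rankIn (mem_insert_of_mem hb : b ∈ insert c L) hcb
    have := rankIn_le_card (insert c L) b
    omega
  obtain ⟨γ', hγ'⟩ : ∃ γ', γ' = if rankIn (insert c L) c ≤ γ then γ - 1 else γ := ⟨_, rfl⟩
  have hshift : ∀ x ∈ L, (rankIn (insert c L) x ≤ γ → rankIn L x ≤ γ') ∧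
      (γ < rankIn (insert c L) x → γ' < rankIn L x) := fun x hx => by
    rcases rankIn_insert_cases hc hx with h | h <;> split_ifs at hγ' <;> omega
  have hsplitL := (isRootedSplit_map_iff.mp hsplit).filter (r := fun x => decide (x ∈ L))
    (by rwa [filter_mem_filter_mem_of_subset (subset_insert c L), ← List.length_map (rankIn L)])
  rw [filter_mem_filter_mem_of_subset (subset_insert c L)] at hsplitL
  refine ⟨γ', by split_ifs at hγ' <;> omega, by split_ifs at hγ' <;> omega,
    isRootedSplit_map_iff.mpr (hsplitL.mono (fun x hx => ?_) (fun x hx => ?_))⟩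
  · exact (hshift x (by simpa using (List.mem_filter.mp hx).2)).1
  · exact (hshift x (by simpa using (List.mem_filter.mp hx).2)).2

theorem FullyKRootedCuttable.restrict_of_Icc_subset (hF : FullyKRootedCuttable k n σ)
    {L : Finset ℕ} (hL : L ⊆ Icc 1 n) (hcard : 2 ≤ #L) (hne : L.Nonempty)
    (hI : Icc (L.min' hne) (L.max' hne) ⊆ L) :
    KRootedCuttable k #L (restrict σ L) := by
  have hLI : L = Icc (L.min' hne) (L.max' hne) :=
    Subset.antisymm (fun x hx => mem_Icc.mpr ⟨L.min'_le x hx, L.le_max' x hx⟩) hI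
  obtain ⟨i, hi, j, hj, hij⟩ := one_lt_card.mp (show 1 < #L by omega)
  rw [hLI]
  exact hF _ _ (mem_Icc.mp (hL (L.min'_mem hne))).1 (L.min'_lt_max' hi hj hij)
    (mem_Icc.mp (hL (L.max'_mem hne))).2

theorem FullyKRootedCuttable.restrict (hσ : IsMultiPerm k n σ) (hF : FullyKRootedCuttable k n σ)
    {L : Finset ℕ} (hL : L ⊆ Icc 1 n) (hcard : 2 ≤ #L) :
    KRootedCuttable k #L (restrict σ L) := by
  have hLn : #L ≤ n := by simpa using card_le_card hL
  revert hL hcard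
  refine strongDownwardInductionOn L (fun L ih hLn hL hcard => ?_) hLn
  have hne : L.Nonempty := card_pos.mp (by omega)
  by_cases hI : Icc (L.min' hne) (L.max' hne) ⊆ L
  · exact hF.restrict_of_Icc_subset hL hcard hne hI
  obtain ⟨c, hcI, hc⟩ := not_subset.mp hI
  have hac : L.min' hne < c :=
    (mem_Icc.mp hcI).1.lt_of_ne (by rintro rfl; exact hc (L.min'_mem hne))
  have hcb : c < L.max' hne :=
    (mem_Icc.mp hcI).2.lt_of_ne (by rintro rfl; exact hc (L.max'_mem hne))
  have hL' : insert c L ⊆ Icc 1 n := insert_subset_iff.mpr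
    ⟨Icc_subset_Icc (mem_Icc.mp (hL (L.min'_mem hne))).1 (mem_Icc.mp (hL (L.max'_mem hne))).2 hcI,
      hL⟩
  have hcard' : #(insert c L) = #L + 1 := card_insert_of_notMem hc
  refine KRootedCuttable.restrict_of_insert hc (L.min'_mem hne) hac (L.max'_mem hne) hcb
    (le_length_restrict hσ hL hne) (ih ?_ (ssubset_insert hc) hL' (by omega))
  simpa using card_le_card hL'

end Restrict

theorem fullyKRootedCuttable_iff_general (k n : ℕ)
    (σ : List ℕ) (hσ : IsMultiPerm k n σ) :
    FullyKRootedCuttable k n σ ↔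
      ∀ L : Finset ℕ, L ⊆ Finset.Icc 1 n → 2 ≤ L.card →
        KRootedCuttable k L.card (restrict σ L) := by
  refine ⟨fun hF L hL hcard => hF.restrict hσ hL hcard, fun h a b ha hab hb => ?_⟩
  exact h (Icc a b) (Icc_subset_Icc ha hb) (by rw [Nat.card_Icc]; omega)

/-- For a `k`-permutation `σ` of degree `n`, the following are equivalent:
(i) the restriction of `σ` to every interval `{a, …, b} ⊆ {1, …, n}` with
`a < b` is `k`-rooted cuttable (i.e. `σ` is fully `k`-rooted cuttable);
(ii) the restriction of `σ` to every subset `L ⊆ {1, …, n}` with `|L| ≥ 2`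
is `k`-rooted cuttable. -/
theorem fullyKRootedCuttable_iff (k n : ℕ) (hk : 1 ≤ k) (hn : 1 ≤ n)
    (σ : List ℕ) (hσ : IsMultiPerm k n σ) :
    FullyKRootedCuttable k n σ ↔
      ∀ L : Finset ℕ, L ⊆ Finset.Icc 1 n → 2 ≤ L.card →
        KRootedCuttable k L.card (restrict σ L) :=
  fullyKRootedCuttable_iff_general k n σ hσ
end

section
/- Let σ be a k-permutation. (1) If σ is fully k-rooted cuttable, then there exist no positions p_1 < ⋯ < p_k < q < r such that σ(r) ≤ σ(p_i) ≤ σ(q) for all i ∈ {1,…,k}. (2) If σ is not fully k-rooted cuttable, then there exist positions p_1 < ⋯ < p_k < q < r with σ(r) < σ(q) and σ(p_i) ≤ σ(q) for all i ∈ {1,…,k}, and there also exist positions p_1 < ⋯ < p_k < q < r with σ(r) < σ(q) and σ(r) ≤ σ(p_i) for all i ∈ {1,…,k}. -/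
namespace Fin

theorem strictMono_snoc {α : Type*} [Preorder α] {n : ℕ} {f : Fin n → α} {a : α}
    (hf : StrictMono f) (ha : ∀ i, f i < a) : StrictMono (snoc f a : Fin (n + 1) → α) := by
  intro i j hij
  induction j using lastCases with
  | last =>
    induction i using lastCases with
    | last => exact absurd hij (lt_irrefl _)
    | cast i => simpa using ha i
  | cast j =>
    induction i using lastCases with
    | last => exact absurd hij (not_lt.2 (le_last _))
    | cast i => simpa using hf (castSucc_lt_castSucc_iff.1 hij)

end Fin

namespace List

variable {α : Type*}

theorem ofFn_sublist_iff {n : ℕ} {v : Fin n → α} {l : List α} :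
    ofFn v <+ l ↔ ∃ f : Fin n → Fin l.length, StrictMono f ∧ ∀ i, l.get (f i) = v i := by
  rw [sublist_iff_exists_fin_orderEmbedding_get_eq]
  constructor
  · rintro ⟨e, he⟩
    refine ⟨e ∘ Fin.cast length_ofFn.symm, e.strictMono.comp (Fin.cast_strictMono _), fun i => ?_⟩
    simpa using (he (Fin.cast length_ofFn.symm i)).symm
  · rintro ⟨f, hf, hv⟩
    exact ⟨OrderEmbedding.ofStrictMono (f ∘ Fin.cast length_ofFn) (hf.comp (Fin.cast_strictMono _)),
      fun i => (get_ofFn v i).trans (hv _).symm⟩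

theorem ofFn_snoc_snoc {n : ℕ} (u : Fin n → α) (x y : α) :
    ofFn (Fin.snoc (Fin.snoc u x) y : Fin (n + 2) → α) = ofFn u ++ [x, y] := by
  simp only [ofFn_succ', Fin.snoc_castSucc, Fin.snoc_last, concat_eq_append, append_assoc,
    singleton_append]

theorem exists_strictMono_lt_lt_iff_sublist {l : List α} {k : ℕ}
    (R : (Fin k → α) → α → α → Prop) :
    (∃ (p : Fin k → Fin l.length) (q r : Fin l.length), StrictMono p ∧ (∀ m, p m < q) ∧ q < r ∧
        R (fun m => l.get (p m)) (l.get q) (l.get r)) ↔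
      ∃ (u : Fin k → α) (x y : α), ofFn u ++ [x, y] <+ l ∧ R u x y := by
  constructor
  · rintro ⟨p, q, r, hp, hpq, hqr, hR⟩
    refine ⟨_, _, _, ?_, hR⟩
    rw [← ofFn_snoc_snoc, ofFn_sublist_iff]
    have hf : StrictMono (Fin.snoc (Fin.snoc p q) r : Fin (k + 2) → Fin l.length) :=
      Fin.strictMono_snoc (Fin.strictMono_snoc hp hpq) fun i => by
        induction i using Fin.lastCases <;> simp [hqr, (hpq _).trans hqr]
    refine ⟨_, hf, fun i => ?_⟩
    induction i using Fin.lastCases with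
    | last => simp
    | cast i => induction i using Fin.lastCases <;> simp
  · rintro ⟨u, x, y, hs, hR⟩
    rw [← ofFn_snoc_snoc, ofFn_sublist_iff] at hs
    obtain ⟨f, hf, hv⟩ := hs
    refine ⟨fun m => f m.castSucc.castSucc, f (Fin.last k).castSucc, f (Fin.last (k + 1)),
      hf.comp (Fin.strictMono_castSucc.comp Fin.strictMono_castSucc),
      fun m => hf (Fin.castSucc_lt_castSucc_iff.2 (Fin.castSucc_lt_last m)),
      hf (Fin.castSucc_lt_last _), ?_⟩
    simpa only [hv, Fin.snoc_castSucc, Fin.snoc_last] using hR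

theorem exists_eq_append_iff_pairwise {P : α → Prop} {l : List α} :
    (∃ ν ω, l = ν ++ ω ∧ (∀ x ∈ ν, P x) ∧ ∀ x ∈ ω, ¬ P x) ↔
      l.Pairwise fun x y => P x ∨ ¬ P y := by
  constructor
  · rintro ⟨ν, ω, rfl, hν, hω⟩
    exact pairwise_append.2 ⟨pairwise_of_forall_mem_list fun x hx _ _ => .inl (hν x hx),
      pairwise_of_forall_mem_list fun _ _ y hy => .inr (hω y hy), fun x hx _ _ => .inl (hν x hx)⟩
  · intro h
    induction l with
    | nil => exact ⟨[], [], rfl, by simp, by simp⟩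
    | cons a l ih =>
      rw [pairwise_cons] at h
      by_cases ha : P a
      · obtain ⟨ν, ω, rfl, hν, hω⟩ := ih h.2
        exact ⟨a :: ν, ω, rfl, forall_mem_cons.2 ⟨ha, hν⟩, hω⟩
      · exact ⟨[], a :: l, rfl, by simp,
          forall_mem_cons.2 ⟨ha, fun y hy => (h.1 y hy).resolve_left ha⟩⟩

end List

open scoped List

theorem isKRootedCut_iff {k n γ : ℕ} {τ : List ℕ} :
    IsKRootedCut k n τ γ ↔ 1 ≤ γ ∧ γ ≤ n - 1 ∧ k ≤ τ.length ∧
      ∀ x y, [x, y] <+ τ.drop k → x ≤ γ ∨ γ < y := by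
  have hsplit : ∀ ρ : List ℕ, (∃ ν ω, ρ = ν ++ ω ∧ (∀ x ∈ ν, x ≤ γ) ∧ ∀ x ∈ ω, γ < x) ↔
      ∀ x y, [x, y] <+ ρ → x ≤ γ ∨ γ < y := fun ρ => by
    simpa only [not_le, List.pairwise_iff_forall_sublist] using
      List.exists_eq_append_iff_pairwise (P := (· ≤ γ)) (l := ρ)
  refine and_congr_right fun _ => and_congr_right fun _ => ?_
  rw [← hsplit]
  constructor
  · rintro ⟨μ, ν, ω, rfl, rfl, hν, hω⟩
    exact ⟨by simp, ν, ω, by simp, hν, hω⟩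
  · rintro ⟨hk, ν, ω, hρ, hν, hω⟩
    refine ⟨τ.take k, ν, ω, ?_, by simp [hk], hν, hω⟩
    rw [List.append_assoc, ← hρ, List.take_append_drop]

theorem IsKRootedCut.le_or_lt_of_append_sublist {k n γ : ℕ} {τ ps : List ℕ} {x y : ℕ}
    (h : IsKRootedCut k n τ γ) (hs : ps ++ [x, y] <+ τ) (hps : ps.length = k) :
    x ≤ γ ∨ γ < y :=
  (isKRootedCut_iff.1 h).2.2.2 x y (by simpa [← hps] using hs.drop ps.length)

theorem restrict_Icc (σ : List ℕ) (a b : ℕ) :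
    restrict σ (Finset.Icc a b) =
      (σ.filter fun x => decide (x ∈ Finset.Icc a b)).map fun x => x + 1 - a := by
  refine List.map_congr_left fun x hmem => ?_
  have hx : a ≤ x ∧ x ≤ b := by simpa using List.of_mem_filter hmem
  have : (Finset.Icc a b).filter (· ≤ x) = Finset.Icc a x := by
    ext z
    simp only [Finset.mem_filter, Finset.mem_Icc]
    omega
  rw [this, Nat.card_Icc]

section MultiPerm

variable {k n : ℕ} {σ : List ℕ}

theorem IsMultiPerm.count_le (hσ : IsMultiPerm k n σ) (z : ℕ) : σ.count z ≤ k := by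
  rw [hσ z]
  split_ifs <;> omega

theorem IsMultiPerm.mem_Icc (hσ : IsMultiPerm k n σ) {z : ℕ} (hz : z ∈ σ) : z ∈ Finset.Icc 1 n := by
  have hpos := List.count_pos_iff.2 hz
  rw [hσ z] at hpos
  split_ifs at hpos with h
  · exact Finset.mem_Icc.2 h
  · omega

theorem FullyKRootedCuttable.not_ofFn_append_sublist (hσ : IsMultiPerm k n σ) (hk : 1 ≤ k)
    (hfull : FullyKRootedCuttable k n σ) {u : Fin k → ℕ} {x y : ℕ}
    (hu : ∀ i, y ≤ u i ∧ u i ≤ x) : ¬ List.ofFn u ++ [x, y] <+ σ := by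
  intro hs
  have hyx : y < x := by
    refine lt_of_le_of_ne ((hu ⟨0, hk⟩).1.trans (hu ⟨0, hk⟩).2) fun hxy => ?_
    have hu' : u = fun _ => x := funext fun i => by have := hu i; omega
    have := (hs.count_le x).trans (hσ.count_le x)
    simp [hu', hxy] at this
  have hy := hσ.mem_Icc (z := y) (hs.subset (by simp))
  have hx := hσ.mem_Icc (z := x) (hs.subset (by simp))
  simp only [Finset.mem_Icc] at hx hy
  obtain ⟨γ, hcut⟩ := hfull y x hy.1 hyx hx.2
  rw [restrict_Icc, Nat.card_Icc] at hcut
  have hfilter : (List.ofFn u ++ [x, y]).filter (fun z => decide (z ∈ Finset.Icc y x)) =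
      List.ofFn u ++ [x, y] := by
    refine List.filter_eq_self.2 fun z hz => ?_
    simp only [List.mem_append, List.mem_ofFn, List.mem_cons, List.not_mem_nil, or_false] at hz
    rcases hz with ⟨i, rfl⟩ | rfl | rfl <;> simp [hu, hyx.le]
  have hsub := (hfilter ▸ hs.filter fun z => decide (z ∈ Finset.Icc y x)).map fun z => z + 1 - y
  have hxy := hcut.le_or_lt_of_append_sublist (by simpa using hsub) (by simp)
  obtain ⟨hγ, hγx, -⟩ := hcut
  omega

theorem IsMultiPerm.exists_sublist_of_not_kRootedCuttable (hσ : IsMultiPerm k n σ) {a b : ℕ}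
    (ha : 1 ≤ a) (hab : a < b) (hb : b ≤ n)
    (hτ : ¬ KRootedCuttable k (Finset.Icc a b).card (restrict σ (Finset.Icc a b)))
    {γ : ℕ} (hγ : 1 ≤ γ) (hγb : γ ≤ b - a) :
    ∃ (u : Fin k → ℕ) (x y : ℕ), List.ofFn u ++ [x, y] <+ σ ∧ (∀ i, a ≤ u i ∧ u i ≤ b) ∧
      a + γ ≤ x ∧ y < a + γ := by
  set F := σ.filter fun z => decide (z ∈ Finset.Icc a b)
  have hkF : k ≤ F.length := by
    have hrep : List.replicate k a <+ σ :=
      List.replicate_sublist_iff.2 (by rw [hσ a, if_pos (by omega)])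
    have := (hrep.filter fun z => decide (z ∈ Finset.Icc a b)).length_le
    rwa [List.filter_replicate, if_pos (by simp; omega), List.length_replicate] at this
  rw [restrict_Icc, Nat.card_Icc] at hτ
  obtain ⟨x', y', hs', hx', hy'⟩ :
      ∃ x' y', [x', y'] <+ (F.map (· + 1 - a)).drop k ∧ γ < x' ∧ y' ≤ γ := by
    by_contra! h
    exact hτ ⟨γ, isKRootedCut_iff.2 ⟨hγ, by omega, by rw [List.length_map]; exact hkF,
      fun x y hs => (le_or_gt x γ).imp_right (h x y hs)⟩⟩
  have hsub := hs'.append_left ((F.map (· + 1 - a)).take k)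
  rw [List.take_append_drop] at hsub
  obtain ⟨l', hl'F, hl'⟩ := List.sublist_map_iff.1 hsub
  obtain ⟨ps, l₂, rfl, hps, hl₂⟩ := List.append_eq_map_iff.1 hl'
  obtain ⟨x, l₃, rfl, rfl, hl₃⟩ := List.map_eq_cons_iff.1 hl₂
  obtain ⟨y, rfl, rfl⟩ := List.map_eq_singleton_iff.1 hl₃
  have hlen : ps.length = k := by simpa [hkF] using congrArg List.length hps
  obtain ⟨u, rfl⟩ : ∃ u : Fin k → ℕ, List.ofFn u = ps := by
    subst hlen
    exact ⟨ps.get, List.ofFn_get ps⟩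
  have hu : ∀ i, a ≤ u i ∧ u i ≤ b := fun i => by
    simpa using List.of_mem_filter (hl'F.subset (by simp : u i ∈ List.ofFn u ++ [x, y]))
  exact ⟨u, x, y, hl'F.trans List.filter_sublist, hu, by omega, by omega⟩

end MultiPerm

theorem fullyKRootedCuttable_patterns_general (k n : ℕ) (hk : 1 ≤ k)
    (σ : List ℕ) (hσ : IsMultiPerm k n σ) :
    (FullyKRootedCuttable k n σ →
      ¬ ∃ (p : Fin k → Fin σ.length) (q r : Fin σ.length),
          StrictMono p ∧ (∀ m, p m < q) ∧ q < r ∧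
          ∀ m, σ.get r ≤ σ.get (p m) ∧ σ.get (p m) ≤ σ.get q) ∧
    (¬ FullyKRootedCuttable k n σ →
      (∃ (p : Fin k → Fin σ.length) (q r : Fin σ.length),
          StrictMono p ∧ (∀ m, p m < q) ∧ q < r ∧
          σ.get r < σ.get q ∧ ∀ m, σ.get (p m) ≤ σ.get q) ∧
      (∃ (p : Fin k → Fin σ.length) (q r : Fin σ.length),
          StrictMono p ∧ (∀ m, p m < q) ∧ q < r ∧
          σ.get r < σ.get q ∧ ∀ m, σ.get r ≤ σ.get (p m))) := by
  refine ⟨fun hfull hpattern => ?_, fun hnot => ?_⟩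
  · obtain ⟨u, x, y, hs, hu⟩ := (List.exists_strictMono_lt_lt_iff_sublist
      fun u x y => ∀ m, y ≤ u m ∧ u m ≤ x).1 hpattern
    exact hfull.not_ofFn_append_sublist hσ hk hu hs
  obtain ⟨a, b, ha, hab, hb, hτ⟩ : ∃ a b, 1 ≤ a ∧ a < b ∧ b ≤ n ∧
      ¬ KRootedCuttable k (Finset.Icc a b).card (restrict σ (Finset.Icc a b)) := by
    simpa [FullyKRootedCuttable] using hnot
  constructor
  · obtain ⟨u, x, y, hs, hu, hx, hy⟩ :=
      hσ.exists_sublist_of_not_kRootedCuttable ha hab hb hτ (γ := b - a) (by omega) le_rfl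
    exact (List.exists_strictMono_lt_lt_iff_sublist fun u x y => y < x ∧ ∀ m, u m ≤ x).2
      ⟨u, x, y, hs, by omega, fun m => by have := hu m; omega⟩
  · obtain ⟨u, x, y, hs, hu, hx, hy⟩ :=
      hσ.exists_sublist_of_not_kRootedCuttable ha hab hb hτ (γ := 1) le_rfl (by omega)
    exact (List.exists_strictMono_lt_lt_iff_sublist fun u x y => y < x ∧ ∀ m, y ≤ u m).2
      ⟨u, x, y, hs, by omega, fun m => by have := hu m; omega⟩

/-- Let `σ` be a `k`-permutation.
(1) If `σ` is fully `k`-rooted cuttable, then there are no positions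
`p₁ < ⋯ < p_k < q < r` such that `σ(r) ≤ σ(pᵢ) ≤ σ(q)` for all `i`.
(2) If `σ` is not fully `k`-rooted cuttable, then there exist positions
`p₁ < ⋯ < p_k < q < r` with `σ(r) < σ(q)` and `σ(pᵢ) ≤ σ(q)` for all `i`,
and there also exist positions `p₁ < ⋯ < p_k < q < r` with `σ(r) < σ(q)` and
`σ(r) ≤ σ(pᵢ)` for all `i`. -/
theorem fullyKRootedCuttable_patterns (k n : ℕ) (hk : 1 ≤ k) (hn : 1 ≤ n)
    (σ : List ℕ) (hσ : IsMultiPerm k n σ) :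
    (FullyKRootedCuttable k n σ →
      ¬ ∃ (p : Fin k → Fin σ.length) (q r : Fin σ.length),
          StrictMono p ∧ (∀ m, p m < q) ∧ q < r ∧
          ∀ m, σ.get r ≤ σ.get (p m) ∧ σ.get (p m) ≤ σ.get q) ∧
    (¬ FullyKRootedCuttable k n σ →
      (∃ (p : Fin k → Fin σ.length) (q r : Fin σ.length),
          StrictMono p ∧ (∀ m, p m < q) ∧ q < r ∧
          σ.get r < σ.get q ∧ ∀ m, σ.get (p m) ≤ σ.get q) ∧
      (∃ (p : Fin k → Fin σ.length) (q r : Fin σ.length),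
          StrictMono p ∧ (∀ m, p m < q) ∧ q < r ∧
          σ.get r < σ.get q ∧ ∀ m, σ.get r ≤ σ.get (p m))) :=
  fullyKRootedCuttable_patterns_general k n hk σ hσ
end
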